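/- For every finite contiguous block S of the Thue–Morse word, the numbers of A's and of B's in S differ by at most 2: for all natural numbers a and n, |#{i : a ≤ i < a + n and t(i) = 0} − #{i : a ≤ i < a + n and t(i) = 1}| ≤ 2. -/

import Mathlib

/-! With `A ↦ 1` and `B ↦ -1`, the Thue–Morse word is a concatenation of the pairs `t(2k) t(2k+1)`,
each of which has sum `0`. Hence every prefix sum is `0` or `±1`, and the sum over a block, being a
difference of two prefix sums, lies in `[-2, 2]`. -/

open Fin.NatCast in
/-- The Thue–Morse sequence: `t n` is the parity of the number of `1` digits
in the binary expansion of `n` (so `t 0 = 0`, `t (2n) = t n`, `t (2n+1) = 1 - t n`). -/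
def thueMorse (n : ℕ) : Fin 2 := ((Nat.digits 2 n).sum : Fin 2)

open Finset

theorem sum_range_two_mul_eq_zero {M : Type*} [AddCommMonoid M] {f : ℕ → M}
    (hpair : ∀ k, f (2 * k) + f (2 * k + 1) = 0) (m : ℕ) :
    ∑ i ∈ range (2 * m), f i = 0 := by
  induction m with
  | zero => simp
  | succ m ih =>
    rw [Nat.mul_succ, sum_range_succ, sum_range_succ, ih, zero_add, hpair]

section PairwiseCancelling

variable {α : Type*} [AddCommGroup α] [LinearOrder α] [IsOrderedAddMonoid α] {f : ℕ → α}

theorem abs_sum_range_le_of_pair_sum_eq_zero (hpair : ∀ k, f (2 * k) + f (2 * k + 1) = 0)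
    {c : α} (hf : ∀ i, |f i| ≤ c) (n : ℕ) : |∑ i ∈ range n, f i| ≤ c := by
  obtain ⟨m, rfl | rfl⟩ := Nat.even_or_odd' n
  · rw [sum_range_two_mul_eq_zero hpair, abs_zero]
    exact (abs_nonneg _).trans (hf 0)
  · rw [sum_range_succ, sum_range_two_mul_eq_zero hpair, zero_add]
    exact hf _

theorem abs_sum_Ico_le_of_pair_sum_eq_zero (hpair : ∀ k, f (2 * k) + f (2 * k + 1) = 0)
    {c : α} (hf : ∀ i, |f i| ≤ c) {a b : ℕ} (hab : a ≤ b) : |∑ i ∈ Ico a b, f i| ≤ c + c := by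
  rw [sum_Ico_eq_sub f hab]
  exact (abs_sub _ _).trans (add_le_add (abs_sum_range_le_of_pair_sum_eq_zero hpair hf b)
    (abs_sum_range_le_of_pair_sum_eq_zero hpair hf a))

end PairwiseCancelling

theorem thueMorse_two_mul (k : ℕ) : thueMorse (2 * k) = thueMorse k := by
  rcases Nat.eq_zero_or_pos k with rfl | hk
  · rfl
  · rw [thueMorse, Nat.digits_def' one_lt_two (by omega)]
    simp [thueMorse]

open Fin.NatCast in
theorem thueMorse_two_mul_add_one (k : ℕ) : thueMorse (2 * k + 1) = 1 + thueMorse k := by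
  rw [thueMorse, Nat.digits_def' one_lt_two (by omega)]
  simp [thueMorse, Nat.mul_add_div, Nat.cast_add]

def thueMorseSign (i : ℕ) : ℤ := if thueMorse i = 0 then 1 else -1

theorem thueMorseSign_pair_sum_eq_zero (k : ℕ) :
    thueMorseSign (2 * k) + thueMorseSign (2 * k + 1) = 0 := by
  rw [thueMorseSign, thueMorseSign, thueMorse_two_mul, thueMorse_two_mul_add_one]
  generalize thueMorse k = x
  fin_cases x <;> rfl

theorem abs_thueMorseSign (i : ℕ) : |thueMorseSign i| ≤ 1 := by
  unfold thueMorseSign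
  split <;> simp

theorem sum_thueMorseSign (s : Finset ℕ) :
    ∑ i ∈ s, thueMorseSign i =
      (#(s.filter fun i => thueMorse i = 0) : ℤ) - #(s.filter fun i => thueMorse i = 1) := by
  have hne : s.filter (fun i => ¬thueMorse i = 0) = s.filter fun i => thueMorse i = 1 :=
    filter_congr fun i _ => ⟨Fin.eq_one_of_ne_zero _, fun h => h ▸ one_ne_zero⟩
  simp [thueMorseSign, sum_ite, hne, sub_eq_add_neg]

/-- In any finite contiguous block of the Thue–Morse word, the numbers of `A`'s
(`t i = 0`) and of `B`'s (`t i = 1`) differ by at most `2`. -/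
theorem thueMorse_block_discrepancy_le_two (a n : ℕ) :
    |((((Finset.Ico a (a + n)).filter fun i => thueMorse i = 0).card : ℤ) -
        (((Finset.Ico a (a + n)).filter fun i => thueMorse i = 1).card : ℤ))| ≤ 2 := by
  rw [← sum_thueMorseSign]
  exact abs_sum_Ico_le_of_pair_sum_eq_zero thueMorseSign_pair_sum_eq_zero
    abs_thueMorseSign (Nat.le_add_right a n)
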